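/- For every n, the star K_{1,n−1} satisfies τ(K_{1,n−1}) = g(n), where g(n) is the least nonnegative integer d with 2^d + d ≥ n; in particular every graph of diameter 2 and order n has metric dimension at least g(n). -/

import Mathlib

open SimpleGraph

/-- `W` is a resolving set for `G`: vertices with equal distance vectors to `W` are equal. -/
def IsResolvingSet {V : Type*} (G : SimpleGraph V) (W : Set V) : Prop :=
  ∀ u v : V, (∀ w ∈ W, G.dist w u = G.dist w v) → u = v

/-- The metric dimension of `G`: the least cardinality of a resolving set. -/
noncomputable def metricDim {V : Type*} [Fintype V] (G : SimpleGraph V) : ℕ :=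
  sInf {n | ∃ W : Finset V, W.card = n ∧ IsResolvingSet G ↑W}

/-- The threshold dimension of `G`: the least metric dimension over spanning supergraphs. -/
noncomputable def thresholdDim {V : Type*} [Fintype V] (G : SimpleGraph V) : ℕ :=
  sInf {n | ∃ H : SimpleGraph V, G ≤ H ∧ metricDim H = n}

/-- The strong product of `k` copies of the path on `{0, …, n-1}`. -/
def strongPow (n k : ℕ) : SimpleGraph (Fin k → Fin n) where
  Adj x y := x ≠ y ∧ ∀ i, ((x i : ℤ) - (y i : ℤ)).natAbs ≤ 1
  symm := by
    constructor
    rintro x y ⟨h1, h2⟩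
    refine ⟨fun h => h1 h.symm, fun i => ?_⟩
    rw [show (y i : ℤ) - (x i : ℤ) = -((x i : ℤ) - (y i : ℤ)) by ring, Int.natAbs_neg]
    exact h2 i
  loopless := ⟨fun x ⟨h, _⟩ => h rfl⟩

/-- `gfun n` is the least nonnegative integer `d` with `2 ^ d + d ≥ n`. -/
noncomputable def gfun (n : ℕ) : ℕ := sInf {d | n ≤ 2 ^ d + d}

/-!
In a connected graph all of whose distances are at most `2`, the distance from `w` to `u ≠ w`
is `1` or `2` according to whether they are adjacent. So a set `W` resolves the graph exactly
when the vertices outside `W` have pairwise distinct neighbourhoods in `W`, which forces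
`n - |W| ≤ 2 ^ |W|`. Every spanning supergraph of the star has a universal vertex and hence such
distances. Conversely, choose `g(n)` landmarks away from the centre, join the centre to every
vertex and give the other non-landmarks pairwise distinct neighbourhoods among the landmarks,
all different from the full set (which is the centre's); there is room since `n - g(n) ≤ 2 ^ g(n)`.
-/

section DistLeTwo

variable {V : Type*} {G : SimpleGraph V}

lemma dist_eq_ite_adj [DecidableRel G.Adj] (hG : G.Connected) (h2 : ∀ u v, G.dist u v ≤ 2)
    {u v : V} (huv : u ≠ v) :
    G.dist u v = if G.Adj u v then 1 else 2 := by
  have h0 : G.dist u v ≠ 0 := fun h => huv (hG.dist_eq_zero_iff.mp h)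
  split_ifs with hadj
  · exact dist_eq_one_iff_adj.mpr hadj
  · have h1 : G.dist u v ≠ 1 := fun h => hadj (dist_eq_one_iff_adj.mp h)
    have := h2 u v
    omega

lemma isResolvingSet_iff_injOn_adj [DecidableEq V] [Fintype V] [DecidableRel G.Adj]
    (hG : G.Connected) (h2 : ∀ u v, G.dist u v ≤ 2) (W : Finset V) :
    IsResolvingSet G W ↔ Set.InjOn (fun u => {w ∈ W | G.Adj w u}) ↑Wᶜ := by
  have dist_eq_iff : ∀ {u v w}, w ∈ W → u ∉ W → v ∉ W →
      (G.dist w u = G.dist w v ↔ (G.Adj w u ↔ G.Adj w v)) := by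
    intro u v w hw hu hv
    rw [dist_eq_ite_adj hG h2 (ne_of_mem_of_not_mem hw hu),
      dist_eq_ite_adj hG h2 (ne_of_mem_of_not_mem hw hv)]
    split_ifs <;> simp_all
  constructor
  · intro hW u hu v hv huv
    rw [Finset.coe_compl, Set.mem_compl_iff, Finset.mem_coe] at hu hv
    refine hW u v fun w hw => (dist_eq_iff hw hu hv).mpr ?_
    have hfilter := Finset.ext_iff.mp huv w
    simp only [Finset.mem_filter] at hfilter
    exact and_congr_right_iff.mp hfilter hw
  · intro hinj u v huv
    by_cases hu : u ∈ W
    · exact hG.dist_eq_zero_iff.mp (by rw [← huv u hu, SimpleGraph.dist_self])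
    by_cases hv : v ∈ W
    · exact (hG.dist_eq_zero_iff.mp (by rw [huv v hv, SimpleGraph.dist_self])).symm
    refine hinj (by simpa) (by simpa) (Finset.ext fun w => ?_)
    simp only [Finset.mem_filter]
    exact and_congr_right fun hw => (dist_eq_iff hw hu hv).mp (huv w hw)

lemma card_le_two_pow_add_card_of_isResolvingSet [Fintype V] [DecidableEq V]
    [DecidableRel G.Adj] (hG : G.Connected) (h2 : ∀ u v, G.dist u v ≤ 2) {W : Finset V}
    (hW : IsResolvingSet G W) : Fintype.card V ≤ 2 ^ W.card + W.card := by
  have hcompl : Wᶜ.card ≤ W.powerset.card :=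
    Finset.card_le_card_of_injOn _
      (fun u _ => Finset.mem_coe.mpr (Finset.mem_powerset.mpr (Finset.filter_subset _ _)))
      ((isResolvingSet_iff_injOn_adj hG h2 W).mp hW)
  rw [Finset.card_powerset] at hcompl
  have := W.card_add_card_compl
  omega

end DistLeTwo

section MetricDim

variable {V : Type*} [Fintype V] {G : SimpleGraph V}

lemma metricDim_le_card_of_isResolvingSet {W : Finset V} (hW : IsResolvingSet G W) :
    metricDim G ≤ W.card :=
  Nat.sInf_le ⟨W, rfl, hW⟩

lemma exists_isResolvingSet_card_eq_metricDim (hG : G.Connected) :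
    ∃ W : Finset V, W.card = metricDim G ∧ IsResolvingSet G W :=
  Nat.sInf_mem (s := {n | ∃ W : Finset V, W.card = n ∧ IsResolvingSet G ↑W})
    ⟨_, Finset.univ, rfl, fun u v huv =>
      hG.dist_eq_zero_iff.mp (by rw [← huv u (by simp), SimpleGraph.dist_self])⟩

lemma thresholdDim_le_metricDim {G H : SimpleGraph V} (hle : G ≤ H) :
    thresholdDim G ≤ metricDim H :=
  Nat.sInf_le ⟨H, hle, rfl⟩

lemma le_thresholdDim {m : ℕ} (h : ∀ H, G ≤ H → m ≤ metricDim H) : m ≤ thresholdDim G :=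
  le_csInf ⟨_, ⊤, le_top, rfl⟩ fun _ ⟨H, hle, hH⟩ => hH ▸ h H hle

end MetricDim

lemma gfun_le_of_le_two_pow_add {n d : ℕ} (h : n ≤ 2 ^ d + d) : gfun n ≤ d :=
  Nat.sInf_le h

lemma le_two_pow_gfun_add (n : ℕ) : n ≤ 2 ^ gfun n + gfun n :=
  Nat.sInf_mem (s := {d | n ≤ 2 ^ d + d}) ⟨n, Nat.le_add_left n _⟩

lemma gfun_le_sub_one {n : ℕ} (hn : 1 ≤ n) : gfun n ≤ n - 1 :=
  gfun_le_of_le_two_pow_add (d := n - 1) (by have := Nat.one_le_two_pow (n := n - 1); omega)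

theorem gfun_card_le_metricDim {V : Type*} [Fintype V] {G : SimpleGraph V} (hG : G.Connected)
    (h2 : ∀ u v, G.dist u v ≤ 2) : gfun (Fintype.card V) ≤ metricDim G := by
  classical
  obtain ⟨W, hcard, hW⟩ := exists_isResolvingSet_card_eq_metricDim hG
  exact hcard ▸ gfun_le_of_le_two_pow_add (card_le_two_pow_add_card_of_isResolvingSet hG h2 hW)

section UniversalVertex

variable {V : Type*} {G : SimpleGraph V} {c : V}

lemma connected_of_forall_adj (hc : ∀ v, v ≠ c → G.Adj c v) : G.Connected :=
  (connected_iff_exists_forall_reachable G).mpr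
    ⟨c, fun v => by
      by_cases h : v = c
      · subst h; exact Reachable.refl _
      · exact (hc v h).reachable⟩

lemma dist_le_two_of_forall_adj (hc : ∀ v, v ≠ c → G.Adj c v) (u v : V) : G.dist u v ≤ 2 := by
  have hdist : ∀ w, G.dist c w ≤ 1 := fun w => by
    by_cases hw : w = c
    · simp [hw]
    · exact (dist_eq_one_iff_adj.mpr (hc w hw)).le
  calc G.dist u v ≤ G.dist u c + G.dist c v := (connected_of_forall_adj hc).dist_triangle
    _ ≤ 2 := by rw [dist_comm]; linarith [hdist u, hdist v]

lemma completeBipartiteGraph_fin_one_le_iff {β : Type*} {H : SimpleGraph (Fin 1 ⊕ β)} :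
    completeBipartiteGraph (Fin 1) β ≤ H ↔ ∀ v, v ≠ Sum.inl 0 → H.Adj (Sum.inl 0) v := by
  constructor
  · rintro hle (a | b) hv
    · exact absurd (congrArg Sum.inl (Subsingleton.elim a 0)) hv
    · exact hle (by simp)
  · rintro hc (a | a) (b | b) hab
    · simp at hab
    · exact Subsingleton.elim a 0 ▸ hc (Sum.inr b) Sum.inr_ne_inl
    · exact Subsingleton.elim b 0 ▸ (hc (Sum.inr a) Sum.inr_ne_inl).symm
    · simp at hab

end UniversalVertex

section CodeGraph

variable {V : Type*} (c : V) (f : V → Finset V)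

def codeGraph : SimpleGraph V :=
  SimpleGraph.fromRel fun x y => x = c ∨ x ∈ f y

variable {c f}

lemma codeGraph_adj_center {v : V} (hv : v ≠ c) : (codeGraph c f).Adj c v :=
  (fromRel_adj _ _ _).mpr ⟨hv.symm, Or.inl (Or.inl rfl)⟩

variable [DecidableEq V] {S : Finset V}

lemma filter_adj_codeGraph [DecidableRel (codeGraph c f).Adj] (hcS : c ∉ S)
    (hfS : ∀ u, f u ⊆ S) (hfc : f c = S) {u : V} (hu : u ∉ S) :
    {w ∈ S | (codeGraph c f).Adj w u} = f u := by
  ext w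
  simp only [Finset.mem_filter, codeGraph, fromRel_adj]
  constructor
  · rintro ⟨hw, -, (rfl | hwu) | (rfl | huw)⟩
    · exact absurd hw hcS
    · exact hwu
    · exact hfc ▸ hw
    · exact absurd (hfS w huw) hu
  · intro hwu
    exact ⟨hfS u hwu, ne_of_mem_of_not_mem (hfS u hwu) hu, Or.inl (Or.inr hwu)⟩

variable [Fintype V]

lemma isResolvingSet_codeGraph (hcS : c ∉ S) (hfS : ∀ u, f u ⊆ S) (hfc : f c = S)
    (hf : Set.InjOn f ↑Sᶜ) : IsResolvingSet (codeGraph c f) S := by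
  classical
  have hc : ∀ v, v ≠ c → (codeGraph c f).Adj c v := fun v => codeGraph_adj_center
  rw [isResolvingSet_iff_injOn_adj (connected_of_forall_adj hc) (dist_le_two_of_forall_adj hc)]
  refine hf.congr fun u hu => (filter_adj_codeGraph hcS hfS hfc ?_).symm
  simpa using hu

/-- Compose any embedding of `Sᶜ` into the subsets of `S` with the transposition exchanging
`S` and the subset assigned to `c`. -/
lemma exists_code (hcS : c ∉ S) (hcard : Sᶜ.card ≤ 2 ^ S.card) :
    ∃ f : V → Finset V, (∀ u, f u ⊆ S) ∧ f c = S ∧ Set.InjOn f ↑Sᶜ := by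
  obtain ⟨e⟩ : Nonempty (↥Sᶜ ↪ ↥S.powerset) :=
    Function.Embedding.nonempty_of_card_le
      (by rw [Fintype.card_coe, Fintype.card_coe, Finset.card_powerset]; exact hcard)
  let σ := Equiv.swap (e ⟨c, by simpa⟩) ⟨S, Finset.mem_powerset_self S⟩
  refine ⟨fun u => if h : u ∈ Sᶜ then (σ (e ⟨u, h⟩) : Finset V) else ∅, fun u => ?_, ?_, ?_⟩
  · dsimp only
    split_ifs
    · exact Finset.mem_powerset.mp (σ _).2
    · exact Finset.empty_subset S
  · simp [hcS, σ]
  · intro u hu v hv huv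
    simp only [Finset.mem_coe.mp hu, Finset.mem_coe.mp hv, dif_pos] at huv
    simpa using e.injective (σ.injective (Subtype.ext huv))

theorem exists_forall_adj_metricDim_le_gfun (c : V) :
    ∃ H : SimpleGraph V, (∀ v, v ≠ c → H.Adj c v) ∧ metricDim H ≤ gfun (Fintype.card V) := by
  have hcardV : 1 ≤ Fintype.card V := Fintype.card_pos_iff.mpr ⟨c⟩
  obtain ⟨S, hS, hSd⟩ : ∃ S ⊆ Finset.univ.erase c, S.card = gfun (Fintype.card V) :=
    Finset.exists_subset_card_eq (by
      rw [Finset.card_erase_of_mem (Finset.mem_univ c), Finset.card_univ]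
      exact gfun_le_sub_one hcardV)
  have hcS : c ∉ S := fun h => by simpa using hS h
  have hcard : Sᶜ.card ≤ 2 ^ S.card := by
    have := le_two_pow_gfun_add (Fintype.card V)
    rw [Finset.card_compl, hSd]
    exact Nat.sub_le_iff_le_add.mpr this
  obtain ⟨f, hfS, hfc, hf⟩ := exists_code hcS hcard
  exact ⟨codeGraph c f, fun v => codeGraph_adj_center,
    hSd ▸ metricDim_le_card_of_isResolvingSet (isResolvingSet_codeGraph hcS hfS hfc hf)⟩

end CodeGraph

/-- `τ(K_{1,n-1}) = g(n)`; in particular every connected graph of diameter `2` and order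
`n` has metric dimension at least `g(n)`. -/
theorem star_thresholdDim (n : ℕ) (hn : 1 ≤ n) :
    thresholdDim (completeBipartiteGraph (Fin 1) (Fin (n - 1))) = gfun n ∧
    ∀ (V : Type) [Fintype V] (H : SimpleGraph V), Fintype.card V = n →
      H.Connected → H.diam = 2 → gfun n ≤ metricDim H := by
  have hcard : Fintype.card (Fin 1 ⊕ Fin (n - 1)) = n := by simp; omega
  refine ⟨le_antisymm ?_ ?_, ?_⟩
  · obtain ⟨H, hH, hdim⟩ := exists_forall_adj_metricDim_le_gfun (Sum.inl 0 : Fin 1 ⊕ Fin (n - 1))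
    rw [hcard] at hdim
    exact (thresholdDim_le_metricDim (completeBipartiteGraph_fin_one_le_iff.mpr hH)).trans hdim
  · refine le_thresholdDim fun H hle => ?_
    have hH := completeBipartiteGraph_fin_one_le_iff.mp hle
    have := gfun_card_le_metricDim (connected_of_forall_adj hH) (dist_le_two_of_forall_adj hH)
    rwa [hcard] at this
  · intro V _ H hV hconn hdiam
    have h2 : ∀ u v, H.dist u v ≤ 2 := fun u v =>
      hdiam ▸ dist_le_diam (ediam_ne_top_of_diam_ne_zero (by omega))
    exact hV ▸ gfun_card_le_metricDim hconn h2
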